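/- Let U₁, U₂ : ℝ² → ℝ be real-valued differentiable functions and let V_{ij} : ℝ² → ℂ (i, j ∈ {1, 2}) be arbitrary functions such that i ∂̄U₁ = V₂₁U₁ + V₂₂U₂ and i ∂U₂ = V₁₁U₁ + V₁₂U₂ hold on ℝ². Define F := U₁ + i U₂. Then for every z ∈ ℝ², ∂̄F(z) = −( (conj(V₁₁)(z) + V₂₂(z) + i(V₂₁(z) − conj(V₁₂)(z)))/2 ) · F(z) − ( (conj(V₁₁)(z) − V₂₂(z) + i(V₂₁(z) + conj(V₁₂)(z)))/2 ) · conj(F(z)). -/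
import Mathlib


/-- `∂̄u = ∂ₓu + i ∂_y u` for a real-valued differentiable `u : ℂ → ℝ`,
viewed as a complex number. -/
noncomputable def dbarR (u : ℂ → ℝ) (z : ℂ) : ℂ :=
  (fderiv ℝ u z 1 : ℝ) + Complex.I * (fderiv ℝ u z Complex.I : ℝ)

/-- `∂u = ∂ₓu - i ∂_y u` for a real-valued differentiable `u : ℂ → ℝ`,
viewed as a complex number. -/
noncomputable def dplusR (u : ℂ → ℝ) (z : ℂ) : ℂ :=
  (fderiv ℝ u z 1 : ℝ) - Complex.I * (fderiv ℝ u z Complex.I : ℝ)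

/-- `∂̄u = ∂ₓu + i ∂_y u` for a (real-)differentiable function `u : ℂ → ℂ`. -/
noncomputable def dbar (u : ℂ → ℂ) (z : ℂ) : ℂ :=
  fderiv ℝ u z 1 + Complex.I * fderiv ℝ u z Complex.I

/-- Reduction of the two-dimensional Dirac system with real-valued solution
`(U₁, U₂)` to a `∂̄`-equation for `F := U₁ + i U₂`. -/
theorem dirac2d_real_reduction
    (U₁ U₂ : ℂ → ℝ) (hU₁ : Differentiable ℝ U₁) (hU₂ : Differentiable ℝ U₂)
    (V₁₁ V₁₂ V₂₁ V₂₂ : ℂ → ℂ)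
    (heq₁ : ∀ z, Complex.I * dbarR U₁ z = V₂₁ z * (U₁ z : ℂ) + V₂₂ z * (U₂ z : ℂ))
    (heq₂ : ∀ z, Complex.I * dplusR U₂ z = V₁₁ z * (U₁ z : ℂ) + V₁₂ z * (U₂ z : ℂ))
    (F : ℂ → ℂ) (hF : ∀ z, F z = (U₁ z : ℂ) + Complex.I * (U₂ z : ℂ)) :
    ∀ z, dbar F z =
      -(((starRingEnd ℂ) (V₁₁ z) + V₂₂ z
          + Complex.I * (V₂₁ z - (starRingEnd ℂ) (V₁₂ z))) / 2) * F z
      - (((starRingEnd ℂ) (V₁₁ z) - V₂₂ z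
          + Complex.I * (V₂₁ z + (starRingEnd ℂ) (V₁₂ z))) / 2) * (starRingEnd ℂ) (F z) := by
  intro z
  have hFz : F = fun w => ((U₁ w : ℂ) + Complex.I * (U₂ w : ℂ)) := funext hF
  have d1 : HasFDerivAt (fun w => ((U₁ w : ℝ) : ℂ))
      (Complex.ofRealCLM.comp (fderiv ℝ U₁ z)) z :=
    Complex.ofRealCLM.hasFDerivAt.comp z (hU₁ z).hasFDerivAt
  have d2 : HasFDerivAt (fun w => ((U₂ w : ℝ) : ℂ))
      (Complex.ofRealCLM.comp (fderiv ℝ U₂ z)) z :=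
    Complex.ofRealCLM.hasFDerivAt.comp z (hU₂ z).hasFDerivAt
  have dF : HasFDerivAt F
      (Complex.ofRealCLM.comp (fderiv ℝ U₁ z)
        + Complex.I • Complex.ofRealCLM.comp (fderiv ℝ U₂ z)) z := by
    rw [hFz]
    exact d1.add (d2.const_mul Complex.I)
  have hdbar : dbar F z = dbarR U₁ z + Complex.I * dbarR U₂ z := by
    simp only [dbar, dF.fderiv, dbarR, ContinuousLinearMap.add_apply,
      ContinuousLinearMap.smul_apply, ContinuousLinearMap.comp_apply,
      Complex.ofRealCLM_apply, smul_eq_mul]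
    ring
  have e1 : dbarR U₁ z = -Complex.I * (V₂₁ z * (U₁ z : ℂ) + V₂₂ z * (U₂ z : ℂ)) := by
    have h := congrArg (fun w => -Complex.I * w) (heq₁ z)
    simpa [← mul_assoc, Complex.I_mul_I] using h
  have e2 : dplusR U₂ z = -Complex.I * (V₁₁ z * (U₁ z : ℂ) + V₁₂ z * (U₂ z : ℂ)) := by
    have h := congrArg (fun w => -Complex.I * w) (heq₂ z)
    simpa [← mul_assoc, Complex.I_mul_I] using h
  have e3 : dbarR U₂ z = (starRingEnd ℂ) (dplusR U₂ z) := by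
    simp [dbarR, dplusR, map_add, map_sub, map_mul, Complex.conj_ofReal, Complex.conj_I]
  have e4 : dbarR U₂ z
      = Complex.I * ((starRingEnd ℂ) (V₁₁ z) * (U₁ z : ℂ)
          + (starRingEnd ℂ) (V₁₂ z) * (U₂ z : ℂ)) := by
    rw [e3, e2]
    simp [map_add, map_mul, Complex.conj_ofReal, Complex.conj_I]
  have hc : (starRingEnd ℂ) (F z) = (U₁ z : ℂ) - Complex.I * (U₂ z : ℂ) := by
    rw [hF z]
    simp [map_add, map_mul, Complex.conj_ofReal, Complex.conj_I]
    ring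
  rw [hdbar, e1, e4, hc, hF z]
  ring_nf
  simp only [Complex.I_sq]
  ring
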